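/- arXiv:2303.07229 — 10 statements merged into one kernel-verified Lean document; each statement's English description precedes it below -/
import Mathlib

section
/- For any positive integers n and t with t ≤ n, let r = ⌊√t⌋ and define D(t) = { i ∈ {1,…,n} : i mod r = 0 or i mod r² ∈ {0,…,r−1} }. Then for any 1 ≤ i, j ≤ n − t + 1, there exists h with 0 ≤ h < t such that i + h ∈ D(t) and j + h ∈ D(t). Concretely, h = a + b·r works, where a = (r − i) mod r and b = (r − ⌊(j + a)/r⌋) mod r. -/
theorem stmt_0 (n t : ℕ) (ht : 0 < t) (htn : t ≤ n)
    (i j : ℕ) (hi1 : 1 ≤ i) (hj1 : 1 ≤ j)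
    (hi : i ≤ n - t + 1) (hj : j ≤ n - t + 1) :
    let r := Nat.sqrt t
    let D : Finset ℕ := (Finset.Icc 1 n).filter (fun x => x % r = 0 ∨ x % r ^ 2 < r)
    let a : ℕ := (((r : ℤ) - (i : ℤ)) % (r : ℤ)).toNat
    let b : ℕ := (((r : ℤ) - (((j + a) / r : ℕ) : ℤ)) % (r : ℤ)).toNat
    let h := a + b * r
    h < t ∧ i + h ∈ D ∧ j + h ∈ D := by
  intro r D a b h
  have hr : 0 < r := Nat.sqrt_pos.mpr ht
  have hrZ : (0:ℤ) < (r:ℤ) := by exact_mod_cast hr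
  have hrt : r * r ≤ t := by have := Nat.sqrt_le' t; simpa [pow_two] using this
  -- a facts
  have haZ : (a : ℤ) = ((r : ℤ) - i) % r :=
    Int.toNat_of_nonneg (Int.emod_nonneg _ (ne_of_gt hrZ))
  have ha_lt : a < r := by
    have := Int.emod_lt_of_pos ((r : ℤ) - i) hrZ
    omega
  have hia : ((i : ℤ) + a) % r = 0 := by
    rw [haZ, Int.add_emod, Int.emod_emod_of_dvd _ dvd_rfl, ← Int.add_emod]
    simp
  have hiaN : (i + a) % r = 0 := by
    have h2 : ((i + a : ℕ) : ℤ) % (r : ℤ) = 0 := by push_cast; exact hia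
    exact_mod_cast h2
  -- b facts
  set q : ℕ := (j + a) / r with hq
  have hbZ : (b : ℤ) = ((r : ℤ) - q) % r :=
    Int.toNat_of_nonneg (Int.emod_nonneg _ (ne_of_gt hrZ))
  have hb_lt : b < r := by
    have := Int.emod_lt_of_pos ((r : ℤ) - q) hrZ
    omega
  have hqb : ((q : ℤ) + b) % r = 0 := by
    rw [hbZ, Int.add_emod, Int.emod_emod_of_dvd _ dvd_rfl, ← Int.add_emod]
    simp
  have hqbN : (q + b) % r = 0 := by
    have : ((q + b : ℕ) : ℤ) % (r : ℤ) = 0 := by push_cast; exact hqb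
    exact_mod_cast this
  obtain ⟨k, hk⟩ := Nat.dvd_of_mod_eq_zero hqbN
  set s : ℕ := (j + a) % r with hs
  have hs_lt : s < r := Nat.mod_lt _ hr
  have hja : j + a = q * r + s := by
    rw [hq, hs]
    exact (Nat.div_add_mod' (j + a) r).symm
  have hjh : j + h = k * (r * r) + s := by
    have : j + h = (q + b) * r + s := by
      simp only [h]; nlinarith [hja]
    rw [this, hk]; ring
  have hjh_mod : (j + h) % r ^ 2 = s := by
    rw [hjh, pow_two, Nat.mul_comm k (r * r), Nat.mul_add_mod]
    exact Nat.mod_eq_of_lt (lt_of_lt_of_le hs_lt (Nat.le_mul_of_pos_left r hr))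
  -- h < t
  have hht : h < t := by
    have h3 : h < r * r := by
      calc h = a + b * r := rfl
        _ < r + b * r := by omega
        _ = (b + 1) * r := by ring
        _ ≤ r * r := Nat.mul_le_mul_right r (by omega)
    omega
  refine ⟨hht, ?_, ?_⟩
  · simp only [D, Finset.mem_filter, Finset.mem_Icc]
    refine ⟨⟨by omega, by omega⟩, Or.inl ?_⟩
    have : (i + h) % r = 0 := by
      have : i + h = (i + a) + b * r := by simp [h]; ring
      rw [this, Nat.add_mul_mod_self_right, hiaN]
    exact this
  · simp only [D, Finset.mem_filter, Finset.mem_Icc]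
    exact ⟨⟨by omega, by omega⟩, Or.inr (by rw [hjh_mod]; exact hs_lt)⟩
end

section
/- For any m ≥ 1, ∑_{ℓ=1}^{⌈m/2⌉} (m − 2ℓ + 1)/ℓ ≥ (m + 1)·((∑_{ℓ=1}^{⌈m/2⌉} 1/ℓ) − 1), and consequently, using H_x > ln x + 1/2, this sum exceeds (m+1)·ln((m+1)/(2.5√e)) whenever m ≥ 4. -/
lemma aux_log_le (t : ℝ) (ht : 1 ≤ t) : Real.log t ≤ (t - 1/t) / 2 := by
  rcases eq_or_lt_of_le ht with h | h
  · simp [← h]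
  · have hx : 0 < Real.log t := Real.log_pos h
    have := (Real.self_lt_sinh_iff).2 hx
    have hs : Real.sinh (Real.log t) = (t - 1/t) / 2 := by
      rw [Real.sinh_eq, Real.exp_log (by linarith), Real.exp_neg, Real.exp_log (by linarith)]
      ring
    linarith [hs ▸ this]

lemma aux_harmonic (k : ℕ) (hk : 1 ≤ k) :
    Real.log k + 1/2 + 1/(2*k) ≤ ∑ ℓ ∈ Finset.Icc 1 k, (1 : ℝ) / (ℓ : ℝ) := by
  induction k, hk using Nat.le_induction with
  | base => norm_num
  | succ n hn ih =>
    rw [Finset.sum_Icc_succ_top (by omega)]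
    have hn' : (1 : ℝ) ≤ (n : ℝ) := by exact_mod_cast hn
    have hpos : (0 : ℝ) < n := by linarith
    have hpos' : (0 : ℝ) < (n : ℝ) + 1 := by linarith
    have key : Real.log ((n : ℝ) + 1) - Real.log n ≤ 1/(2*n) + 1/(2*(n+1)) := by
      have h1 : (1 : ℝ) ≤ ((n : ℝ) + 1) / n := by
        rw [le_div_iff₀ hpos]; linarith
      have h2 := aux_log_le (((n : ℝ) + 1) / n) h1
      rw [Real.log_div (by linarith) (by linarith)] at h2
      have h3 : (((n:ℝ)+1)/n - 1/(((n:ℝ)+1)/n)) / 2 = 1/(2*n) + 1/(2*(n+1)) := by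
        field_simp; ring
      rw [h3] at h2
      linarith
    push_cast
    have hhalf : 1/((n:ℝ)+1) = 2 * (1/(2*((n:ℝ)+1))) := by field_simp
    linarith

theorem stmt_5 (m : ℕ) (hm : 1 ≤ m) :
    ((m : ℝ) + 1) * ((∑ ℓ ∈ Finset.Icc 1 ((m + 1) / 2), (1 : ℝ) / (ℓ : ℝ)) - 1) ≤
      (∑ ℓ ∈ Finset.Icc 1 ((m + 1) / 2), ((m : ℝ) - 2 * (ℓ : ℝ) + 1) / (ℓ : ℝ)) ∧
    (4 ≤ m →
      ((m : ℝ) + 1) * Real.log (((m : ℝ) + 1) / (2.5 * Real.sqrt (Real.exp 1))) <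
        ∑ ℓ ∈ Finset.Icc 1 ((m + 1) / 2), ((m : ℝ) - 2 * (ℓ : ℝ) + 1) / (ℓ : ℝ)) := by
  set k := (m + 1) / 2 with hkdef
  have hk1 : 1 ≤ k := by omega
  have h2k : 2 * k ≤ m + 1 := by omega
  have h2k' : m + 1 ≤ 2 * k + 1 := by omega
  set H : ℝ := ∑ ℓ ∈ Finset.Icc 1 k, (1 : ℝ) / (ℓ : ℝ) with hH
  have hsum : (∑ ℓ ∈ Finset.Icc 1 k, ((m : ℝ) - 2 * (ℓ : ℝ) + 1) / (ℓ : ℝ))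
      = ((m : ℝ) + 1) * H - 2 * k := by
    have : ∀ ℓ ∈ Finset.Icc 1 k, ((m : ℝ) - 2 * (ℓ : ℝ) + 1) / (ℓ : ℝ)
        = ((m : ℝ) + 1) * (1 / (ℓ : ℝ)) - 2 := by
      intro ℓ hℓ
      have h1 : 1 ≤ ℓ := (Finset.mem_Icc.1 hℓ).1
      have : (0 : ℝ) < ℓ := by exact_mod_cast Nat.pos_of_ne_zero (by omega)
      field_simp
      ring
    rw [Finset.sum_congr rfl this, Finset.sum_sub_distrib, ← Finset.mul_sum,
      Finset.sum_const, Nat.card_Icc]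
    push_cast [Nat.add_sub_cancel]
    ring
  rw [hsum]
  have hr2k : (2 : ℝ) * k ≤ (m : ℝ) + 1 := by exact_mod_cast h2k
  have hr2k' : (m : ℝ) + 1 ≤ 2 * k + 1 := by exact_mod_cast h2k'
  have hHlb := aux_harmonic k hk1
  constructor
  · nlinarith [hr2k]
  · intro hm4
    have hk2 : 2 ≤ k := by omega
    have hrk : (2 : ℝ) ≤ (k : ℝ) := by exact_mod_cast hk2
    have hkpos : (0 : ℝ) < k := by linarith
    have hm1 : (0 : ℝ) < (m : ℝ) + 1 := by positivity
    have hse : Real.sqrt (Real.exp 1) = Real.exp (1/2) := by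
      rw [show Real.exp 1 = Real.exp (1/2) * Real.exp (1/2) by
        rw [← Real.exp_add]; norm_num]
      exact Real.sqrt_mul_self (Real.exp_pos _).le
    have hlog : Real.log (((m : ℝ) + 1) / (2.5 * Real.sqrt (Real.exp 1)))
        = Real.log ((m : ℝ) + 1) - Real.log 2.5 - 1/2 := by
      rw [hse, Real.log_div (by linarith) (by positivity), Real.log_mul (by norm_num)
        (by positivity), Real.log_exp]
      ring
    rw [hlog]
    -- bound log((m+1)) - log 2.5 - log k  via log x ≤ x - 1
    have hlogk : Real.log ((m : ℝ) + 1) - Real.log 2.5 - Real.log k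
        = Real.log (((m : ℝ) + 1) / (2.5 * k)) := by
      rw [Real.log_div (by linarith) (by positivity), Real.log_mul (by norm_num)
        (by linarith)]
      ring
    have hlb : Real.log (((m : ℝ) + 1) / (2.5 * k)) ≤ ((m : ℝ) + 1) / (2.5 * k) - 1 :=
      Real.log_le_sub_one_of_pos (by positivity)
    have hH2 : Real.log k + 1/2 + 1/(2*k) ≤ H := hHlb
    -- final: (m+1)*(log(m+1)-log2.5-1/2) < (m+1)*H - 2k
    have hkey : ((m : ℝ) + 1) * (((m : ℝ) + 1) / (2.5 * k) - 1)
        < ((m : ℝ) + 1) * (1/(2*k)) + (((m : ℝ) + 1) - 2 * k) := by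
      have heq : ((m : ℝ) + 1) * (((m : ℝ) + 1) / (2.5 * k) - 1)
          - (((m : ℝ) + 1) * (1/(2*k)) + (((m : ℝ) + 1) - 2 * k))
          = (4*((m:ℝ)+1)^2 - 20*((m:ℝ)+1)*k + 20*(k:ℝ)^2 - 5*((m:ℝ)+1)) / (10*k) := by
        field_simp; ring
      have hneg : (4*((m:ℝ)+1)^2 - 20*((m:ℝ)+1)*k + 20*(k:ℝ)^2 - 5*((m:ℝ)+1)) / (10*k) < 0 := by
        apply div_neg_of_neg_of_pos _ (by positivity)
        nlinarith [mul_nonneg (sub_nonneg.2 hr2k) (sub_nonneg.2 hr2k')]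
      linarith
    have hmono : ((m : ℝ) + 1) * (Real.log ((m : ℝ) + 1) - Real.log 2.5 - Real.log k)
        ≤ ((m : ℝ) + 1) * (((m : ℝ) + 1) / (2.5 * k) - 1) := by
      rw [hlogk]
      exact mul_le_mul_of_nonneg_left hlb (by linarith)
    nlinarith [mul_le_mul_of_nonneg_left hH2 (le_of_lt hm1)]
end

section
/- Consider an 'elimination' game on the interval {i,…,j} of m = j − i + 1 positions: an interval [x, x+2ℓ−1] with i ≤ x and x+2ℓ−1 ≤ j is eliminated by an edge (y, y+ℓ) if x ≤ y < x+ℓ. A single edge (y, y+ℓ) eliminates at most ℓ intervals of length 2ℓ, and there are m − 2ℓ + 1 intervals of length 2ℓ inside {i,…,j}. Hence any set of edges eliminating all intervals of all even lengths in {i,…,j} has size at least ∑_{ℓ=1}^{⌊m/2⌋} (m − 2ℓ + 1)/ℓ. -/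
theorem stmt_6 (i j : ℕ) (hi : 1 ≤ i) (hij : i ≤ j) (F : Finset (ℕ × ℕ))
    (hedge : ∀ e ∈ F, 1 ≤ e.2 ∧ i ≤ e.1 ∧ e.1 + e.2 ≤ j)
    (helim : ∀ x ℓ : ℕ, 1 ≤ ℓ → i ≤ x → x + 2 * ℓ - 1 ≤ j →
      ∃ e ∈ F, e.2 = ℓ ∧ x ≤ e.1 ∧ e.1 < x + ℓ) :
    ∑ ℓ ∈ Finset.Icc 1 ((j - i + 1) / 2),
        (((j - i + 1 : ℕ) : ℝ) - 2 * (ℓ : ℝ) + 1) / (ℓ : ℝ) ≤ (F.card : ℝ) := by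
  classical
  set m := j - i + 1 with hm
  -- per-ℓ bound
  have key : ∀ ℓ ∈ Finset.Icc 1 (m / 2),
      (((m : ℕ) : ℝ) - 2 * (ℓ : ℝ) + 1) / (ℓ : ℝ)
        ≤ ((F.filter (fun e => e.2 = ℓ)).card : ℝ) := by
    intro ℓ hℓ
    simp only [Finset.mem_Icc] at hℓ
    obtain ⟨hℓ1, hℓ2⟩ := hℓ
    have h2ℓ : 2 * ℓ ≤ m := by omega
    -- set of intervals
    set S : Finset ℕ := Finset.Icc i (j + 1 - 2 * ℓ) with hS
    have hScard : S.card = m - 2 * ℓ + 1 := by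
      rw [hS, Nat.card_Icc]; omega
    -- choice function
    have hch : ∀ x ∈ S, ∃ e ∈ F, e.2 = ℓ ∧ x ≤ e.1 ∧ e.1 < x + ℓ := by
      intro x hx
      rw [hS, Finset.mem_Icc] at hx
      exact helim x ℓ hℓ1 hx.1 (by omega)
    set g : ℕ → ℕ × ℕ := fun x =>
      if h : ∃ e ∈ F, e.2 = ℓ ∧ x ≤ e.1 ∧ e.1 < x + ℓ then h.choose else (0, 0)
      with hg
    have hgspec : ∀ x ∈ S, g x ∈ F ∧ (g x).2 = ℓ ∧ x ≤ (g x).1 ∧ (g x).1 < x + ℓ := by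
      intro x hx
      have h := hch x hx
      rw [hg]
      simp only [dif_pos h]
      exact ⟨h.choose_spec.1, h.choose_spec.2⟩
    have hmain : S.card ≤ ℓ * (S.image g).card := by
      apply Finset.card_le_mul_card_image
      intro a ha
      calc (S.filter fun x => g x = a).card
          ≤ (Finset.Icc (a.1 + 1 - ℓ) a.1).card := by
            apply Finset.card_le_card
            intro x hx
            simp only [Finset.mem_filter] at hx
            obtain ⟨hxS, hxg⟩ := hx
            obtain ⟨_, _, hle, hlt⟩ := hgspec x hxS
            rw [hxg] at hle hlt
            rw [Finset.mem_Icc]; omega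
        _ ≤ ℓ := by rw [Nat.card_Icc]; omega
    have himg : S.image g ⊆ F.filter (fun e => e.2 = ℓ) := by
      intro e he
      obtain ⟨x, hx, rfl⟩ := Finset.mem_image.mp he
      obtain ⟨h1, h2, _⟩ := hgspec x hx
      exact Finset.mem_filter.mpr ⟨h1, h2⟩
    have hnat : m - 2 * ℓ + 1 ≤ ℓ * (F.filter (fun e => e.2 = ℓ)).card := by
      calc m - 2 * ℓ + 1 = S.card := hScard.symm
        _ ≤ ℓ * (S.image g).card := hmain
        _ ≤ ℓ * (F.filter (fun e => e.2 = ℓ)).card :=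
            Nat.mul_le_mul_left ℓ (Finset.card_le_card himg)
    have hℓpos : (0 : ℝ) < (ℓ : ℝ) := by positivity
    rw [div_le_iff₀ hℓpos]
    have : ((m - 2 * ℓ + 1 : ℕ) : ℝ) ≤ ((ℓ * (F.filter (fun e => e.2 = ℓ)).card : ℕ) : ℝ) := by
      exact_mod_cast hnat
    have hmc : ((m : ℕ) : ℝ) = ((j - i : ℕ) : ℝ) + 1 := by rw [hm]; push_cast; ring
    push_cast [Nat.cast_sub h2ℓ] at this
    rw [hmc]
    linarith
  -- sum the per-ℓ bounds
  calc ∑ ℓ ∈ Finset.Icc 1 (m / 2), (((m : ℕ) : ℝ) - 2 * (ℓ : ℝ) + 1) / (ℓ : ℝ)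
      ≤ ∑ ℓ ∈ Finset.Icc 1 (m / 2), ((F.filter (fun e => e.2 = ℓ)).card : ℝ) :=
        Finset.sum_le_sum key
    _ = ((∑ ℓ ∈ Finset.Icc 1 (m / 2), (F.filter (fun e => e.2 = ℓ)).card : ℕ) : ℝ) := by
        push_cast; ring
    _ ≤ (F.card : ℝ) := by
        have : ∑ ℓ ∈ Finset.Icc 1 (m / 2), (F.filter (fun e => e.2 = ℓ)).card ≤ F.card := by
          rw [← Finset.card_biUnion]
          · exact Finset.card_le_card (Finset.biUnion_subset.mpr
              (fun ℓ _ => Finset.filter_subset _ _))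
          · intro a _ b _ hab
            simp only [Finset.disjoint_left, Finset.mem_filter]
            rintro e ⟨_, h1⟩ ⟨_, h2⟩
            exact hab (h1 ▸ h2 ▸ rfl)
        exact_mod_cast this
end

section
/- Let T be a string of length n with a period p (i.e., T[i] = T[i+p] for all 1 ≤ i ≤ n − p). If T is obtained by doubling each character of a string S of length n/2 (T[2k−1] = T[2k] = S[k]), then the number of distinct symbols in S equals the number of positions k such that S[k] does not occur in S[1..k−1]; moreover, these positions correspond exactly to length-one phrases of the f-factorisation of T starting at odd positions. -/
theorem stmt_9 {α : Type*} [DecidableEq α] (m : ℕ) (S T : ℕ → α)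
    (hT : ∀ k < m, T (2 * k) = S k ∧ T (2 * k + 1) = S k) :
    ((Finset.range m).image S).card =
      ((Finset.range m).filter (fun k => ∀ j < k, S j ≠ S k)).card ∧
    ∀ k < m, ((∀ j < k, S j ≠ S k) ↔ (∀ j < 2 * k, T j ≠ T (2 * k))) := by
  constructor
  · have key : ∀ k, ∃ k0 ≤ k, (∀ j < k0, S j ≠ S k0) ∧ S k0 = S k := by
      intro k
      induction k using Nat.strong_induction_on with
      | _ k ih =>
        by_cases h : ∀ j < k, S j ≠ S k
        · exact ⟨k, le_rfl, h, rfl⟩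
        · push_neg at h
          obtain ⟨j, hj, hje⟩ := h
          obtain ⟨k0, hk0, h1, h2⟩ := ih j hj
          exact ⟨k0, hk0.trans hj.le, h1, h2.trans hje⟩
    have himg : (Finset.range m).image S =
        ((Finset.range m).filter (fun k => ∀ j < k, S j ≠ S k)).image S := by
      apply Finset.Subset.antisymm
      · intro a ha
        simp only [Finset.mem_image, Finset.mem_range, Finset.mem_filter] at ha ⊢
        obtain ⟨k, hk, hke⟩ := ha
        obtain ⟨k0, hk0, h1, h2⟩ := key k
        exact ⟨k0, ⟨lt_of_le_of_lt hk0 hk, h1⟩, h2.trans hke⟩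
      · exact Finset.image_subset_image (Finset.filter_subset _ _)
    rw [himg, Finset.card_image_of_injOn]
    intro a ha b hb hab
    simp only [Finset.mem_coe, Finset.mem_filter, Finset.mem_range] at ha hb
    rcases lt_trichotomy a b with h | h | h
    · exact absurd hab (hb.2 a h)
    · exact h
    · exact absurd hab.symm (ha.2 b h)
  · intro k hk
    constructor
    · intro h j hj
      rcases Nat.even_or_odd j with ⟨q, hq⟩ | ⟨q, hq⟩
      · have hqk : q < k := by omega
        have := (hT q (hqk.trans hk)).1
        rw [hq, show q + q = 2 * q by ring, this, (hT k hk).1]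
        exact h q hqk
      · have hqk : q < k := by omega
        have := (hT q (hqk.trans hk)).2
        rw [hq, this, (hT k hk).1]
        exact h q hqk
    · intro h j hj
      have := h (2 * j) (by omega)
      rw [(hT j (hj.trans hk)).1, (hT k hk).1] at this
      exact this
end

section
/- Let T = b₁b₂⋯b_z be a Δ-approximate LZ factorisation of a string T. For every square T[s..s+2ℓ−1] of length 2ℓ ≥ 8Δ, there is at least one phrase b_i whose tail has length at least ℓ/4 ≥ Δ and such that tail(b_i) intersects the right-hand side T[s+ℓ..s+2ℓ−1] of the square. -/
/-- The end position `e'` of the unique standard LZ phrase `T[s..e']` of `T[1..n]`: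
`T[s..e'-1]` occurs at least twice in `T[1..e'-1]` (i.e. has an earlier occurrence),
and either `e' = n` or `T[s..e']` occurs only once in `T[1..e']`. -/
def LZEnd {α : Type*} (T : ℕ → α) (n s e' : ℕ) : Prop :=
  s ≤ e' ∧ e' ≤ n ∧
  (e' = s ∨ ∃ p, 1 ≤ p ∧ p < s ∧ ∀ k, s + k ≤ e' - 1 → T (p + k) = T (s + k)) ∧
  (e' = n ∨ ∀ p, 1 ≤ p → p < s → ∃ k, s + k ≤ e' ∧ T (p + k) ≠ T (s + k))

/-- A `Δ`-approximate LZ factorisation of `T[1..n]` into `z` phrases.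
Phrase `i` (for `i < z`) is `T[b i .. b (i+1) - 1]`, with head `T[b i .. m i - 1]`
(of length `< Δ`) and tail `T[m i .. b (i+1) - 1]` which is empty or occurs at
least twice in `T[1..b (i+1) - 1]`; moreover the standard LZ phrase `T[b i..e']`
starting at `b i` satisfies `e' - 1 ≤ b (i+1) - 1`. -/
structure ApproxLZ {α : Type*} (T : ℕ → α) (n Δ z : ℕ) where
  b : ℕ → ℕ
  m : ℕ → ℕ
  b_zero : b 0 = 1
  b_last : b z = n + 1
  b_mono : ∀ i < z, b i < b (i + 1)
  m_lb : ∀ i < z, b i ≤ m i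
  m_ub : ∀ i < z, m i ≤ b (i + 1)
  head_short : ∀ i < z, m i - b i < Δ
  tail_occ : ∀ i < z, m i = b (i + 1) ∨
    ∃ p, 1 ≤ p ∧ p < m i ∧ ∀ k, m i + k ≤ b (i + 1) - 1 → T (p + k) = T (m i + k)
  lz_bound : ∀ i < z, ∀ e', LZEnd T n (b i) e' → e' ≤ b (i + 1)


lemma exists_LZEnd {α : Type*} (T : ℕ → α) (n p₀ : ℕ) (h1 : 1 ≤ p₀) (hn : p₀ ≤ n) :
    ∃ e', LZEnd T n p₀ e' := by
  classical
  set Q : ℕ → Prop := fun e => p₀ ≤ e ∧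
    (e = p₀ ∨ ∃ p, 1 ≤ p ∧ p < p₀ ∧ ∀ k, p₀ + k ≤ e - 1 → T (p + k) = T (p₀ + k))
    with hQdef
  have hQp0 : Q p₀ := ⟨le_rfl, Or.inl rfl⟩
  have hspec : Q (Nat.findGreatest Q n) := Nat.findGreatest_spec hn hQp0
  have hle : p₀ ≤ Nat.findGreatest Q n := hspec.1
  have hen : Nat.findGreatest Q n ≤ n := Nat.findGreatest_le n
  refine ⟨Nat.findGreatest Q n, hle, hen, hspec.2, ?_⟩
  rcases eq_or_lt_of_le hen with h | h
  · exact Or.inl h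
  · right
    intro p hp hpp
    by_contra hcon
    push_neg at hcon
    have hQ1 : Q (Nat.findGreatest Q n + 1) :=
      ⟨by omega, Or.inr ⟨p, hp, hpp, fun k hk => hcon k (by omega)⟩⟩
    exact Nat.findGreatest_is_greatest (Nat.lt_succ_self _) (by omega) hQ1

theorem stmt_10 {α : Type*} (T : ℕ → α) (n Δ z : ℕ) (hΔ : 1 ≤ Δ)
    (F : ApproxLZ T n Δ z) (s ℓ : ℕ) (hs : 1 ≤ s) (hℓ : 1 ≤ ℓ)
    (hin : s + 2 * ℓ - 1 ≤ n) (hsq : ∀ k < ℓ, T (s + k) = T (s + ℓ + k))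
    (hlong : 8 * Δ ≤ 2 * ℓ) :
    ∃ i < z, ℓ ≤ 4 * (F.b (i + 1) - F.m i) ∧ Δ ≤ F.b (i + 1) - F.m i ∧
      F.m i ≤ s + 2 * ℓ - 1 ∧ s + ℓ ≤ F.b (i + 1) - 1 := by
  classical
  have hΔℓ : 4 * Δ ≤ ℓ := by omega
  have hb0 := F.b_zero
  have hbz := F.b_last
  have hzpos : 0 < z := by
    by_contra h
    have hz : z = 0 := by omega
    have he : F.b z = F.b 0 := congrArg F.b hz
    omega
  -- find the last phrase index i with b i ≤ s + ℓ
  have hex : ∃ i, i < z ∧ F.b i ≤ s + ℓ ∧ s + ℓ < F.b (i + 1) := by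
    set P : ℕ → Prop := fun j => j < z ∧ F.b j ≤ s + ℓ with hPdef
    have hP0 : P 0 := ⟨hzpos, by rw [hb0]; omega⟩
    have hPi : P (Nat.findGreatest P z) := Nat.findGreatest_spec (Nat.zero_le z) hP0
    refine ⟨Nat.findGreatest P z, hPi.1, hPi.2, ?_⟩
    rcases Nat.lt_or_ge (Nat.findGreatest P z + 1) z with h | h
    · by_contra hc
      push_neg at hc
      have hP1 : P (Nat.findGreatest P z + 1) := ⟨h, hc⟩
      exact Nat.findGreatest_is_greatest (Nat.lt_succ_self _) (by omega) hP1
    · have hz : Nat.findGreatest P z + 1 = z := by omega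
      have he : F.b (Nat.findGreatest P z + 1) = F.b z := congrArg F.b hz
      omega
  obtain ⟨i, hiz, hbi, hbi1⟩ := hex
  have hmhead := F.head_short i hiz
  have hmlb := F.m_lb i hiz
  have hmub := F.m_ub i hiz
  by_cases hcase : 2 * s + 3 * ℓ + 1 ≤ 2 * F.b (i + 1)
  · exact ⟨i, hiz, by omega, by omega, by omega, by omega⟩
  · -- phrase i+1 starts inside the right half of the square
    have hcase2 : 2 * F.b (i + 1) ≤ 2 * s + 3 * ℓ := by omega
    have hi1z : i + 1 < z := by
      by_contra hc
      have hz : i + 1 = z := by omega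
      have he : F.b (i + 1) = F.b z := congrArg F.b hz
      omega
    obtain ⟨e', hlz⟩ := exists_LZEnd T n (F.b (i + 1)) (by omega) (by omega)
    have hbound : s + 2 * ℓ - 1 ≤ e' := by
      obtain ⟨hle, hen, _, hlast⟩ := hlz
      rcases hlast with h | h
      · omega
      · by_contra hc
        push_neg at hc
        obtain ⟨k, hk, hne⟩ := h (F.b (i + 1) - ℓ) (by omega) (by omega)
        apply hne
        have hkey := hsq (F.b (i + 1) + k - (s + ℓ)) (by omega)
        have e1 : F.b (i + 1) - ℓ + k = s + (F.b (i + 1) + k - (s + ℓ)) := by omega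
        have e2 : s + ℓ + (F.b (i + 1) + k - (s + ℓ)) = F.b (i + 1) + k := by omega
        rw [e2] at hkey
        rw [e1]
        exact hkey
    have hnext : e' ≤ F.b (i + 1 + 1) := F.lz_bound (i + 1) hi1z e' hlz
    have hmhead1 := F.head_short (i + 1) hi1z
    have hmlb1 := F.m_lb (i + 1) hi1z
    have hmub1 := F.m_ub (i + 1) hi1z
    exact ⟨i + 1, hi1z, by omega, by omega, by omega, by omega⟩
end

section
/- Let T = b₁b₂⋯b_z be a Δ-approximate LZ factorisation of a string T. For every run ⟨s,e,p⟩ of T with length e−s+1 ≥ 8Δ, there is at least one phrase b_i whose tail has length at least (e−s+1)/8 ≥ Δ and such that tail(b_i) intersects the right-hand side T[s+⌈(e−s+1)/2⌉..e] of the run. -/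
/-- `p` is a period of the fragment `T[s..e]`. -/
def IsPeriodOn {α : Type*} (T : ℕ → α) (s e p : ℕ) : Prop :=
  ∀ i, s ≤ i → i + p ≤ e → T i = T (i + p)

/-- `⟨s,e,p⟩` is a run (maximal repetition) of `T[1..n]`: `p` is the smallest
period of `T[s..e]`, `2p ≤ e-s+1`, and the periodicity extends neither to the
left nor to the right. -/
def IsRun {α : Type*} (T : ℕ → α) (n s e p : ℕ) : Prop :=
  1 ≤ s ∧ s ≤ e ∧ e ≤ n ∧ 1 ≤ p ∧ 2 * p ≤ e - s + 1 ∧ IsPeriodOn T s e p ∧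
  (∀ q, 1 ≤ q → IsPeriodOn T s e q → p ≤ q) ∧
  (s = 1 ∨ T (s - 1) ≠ T (s - 1 + p)) ∧ (e = n ∨ T (e + 1) ≠ T (e + 1 - p))

lemma KL_aux {α : Type*} (T : ℕ → α) (n Δ z : ℕ) (F : ApproxLZ T n Δ z)
    (s e p : ℕ) (hs1 : 1 ≤ s) (hp1 : 1 ≤ p) (hen : e ≤ n)
    (hper : IsPeriodOn T s e p) (i : ℕ) (hi : i < z)
    (h1 : s + p ≤ F.b i) (h2 : F.b i ≤ e) : e ≤ F.b (i + 1) := by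
  classical
  set B := F.b i with hB
  set Q : ℕ → Prop := fun e'' => B ≤ e'' ∧ (e'' = B ∨ ∃ q, 1 ≤ q ∧ q < B ∧
      ∀ k, B + k ≤ e'' - 1 → T (q + k) = T (B + k)) with hQ
  have hQe : Q e := by
    refine ⟨h2, Or.inr ⟨B - p, by omega, by omega, ?_⟩⟩
    intro k hk
    have h₁ : s ≤ B - p + k := by omega
    have h₂ : B - p + k + p ≤ e := by omega
    have h3 := hper (B - p + k) h₁ h₂
    have heq : B - p + k + p = B + k := by omega
    rw [heq] at h3
    exact h3
  set e' := Nat.findGreatest Q n with he'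
  have hee' : e ≤ e' := Nat.le_findGreatest hen hQe
  have hQe' : Q e' := Nat.findGreatest_spec hen hQe
  have he'n : e' ≤ n := Nat.findGreatest_le n
  have hlz : LZEnd T n B e' := by
    refine ⟨hQe'.1, he'n, hQe'.2, ?_⟩
    by_cases hcase : e' = n
    · exact Or.inl hcase
    · refine Or.inr fun q hq1 hqB => ?_
      by_contra hcon
      push_neg at hcon
      have hQnext : Q (e' + 1) :=
        ⟨by omega, Or.inr ⟨q, hq1, hqB, fun k hk => hcon k (by omega)⟩⟩
      have : e' + 1 ≤ e' := Nat.le_findGreatest (by omega) hQnext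
      omega
  have hfin := F.lz_bound i hi e' hlz
  omega

theorem stmt_11 {α : Type*} (T : ℕ → α) (n Δ z : ℕ) (hΔ : 1 ≤ Δ)
    (F : ApproxLZ T n Δ z) (s e p : ℕ) (hrun : IsRun T n s e p)
    (hlong : 8 * Δ ≤ e - s + 1) :
    ∃ i < z, e - s + 1 ≤ 8 * (F.b (i + 1) - F.m i) ∧ Δ ≤ F.b (i + 1) - F.m i ∧
      F.m i ≤ e ∧ s + (e - s + 2) / 2 ≤ F.b (i + 1) - 1 := by
  classical
  obtain ⟨hs1, hse, hen, hp1, h2p, hper, -, -, -⟩ := hrun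
  set mid := s + (e - s + 2) / 2 with hmid
  have hmidn : mid ≤ n := by omega
  have hb0 : F.b 0 = 1 := F.b_zero
  have hbz : F.b z = n + 1 := F.b_last
  set P : ℕ → Prop := fun j => F.b j ≤ mid with hP
  have hP0 : P 0 := by simp only [hP, hb0]; omega
  set i := Nat.findGreatest P z with hi_def
  have hiz : i ≤ z := Nat.findGreatest_le z
  have hPi : F.b i ≤ mid := Nat.findGreatest_spec (Nat.zero_le z) hP0
  have hilt : i < z := by
    rcases Nat.lt_or_ge i z with h | h
    · exact h
    · exfalso
      have hiz' : i = z := le_antisymm hiz h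
      rw [hiz', hbz] at hPi
      omega
  have hnext : mid < F.b (i + 1) := by
    by_contra h
    push_neg at h
    exact Nat.findGreatest_is_greatest (P := P) (n := z) (k := i + 1) (by omega) (by omega) h
  have hmlb := F.m_lb i hilt
  have hmub := F.m_ub i hilt
  have hhead := F.head_short i hilt
  rcases Nat.lt_or_ge (F.b i) (s + p) with hc2 | hc1
  · -- Case 2 : b i < s + p
    rcases Nat.lt_or_ge e (F.b (i + 1) + (e - s + 1) / 4) with h2b | h2a
    · -- 2b : phrase i works
      exact ⟨i, hilt, by omega, by omega, by omega, by omega⟩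
    · -- 2a : phrase i+1 works
      have hble : F.b (i + 1) ≤ e := by omega
      have hi1z : i + 1 < z := by
        rcases Nat.lt_or_ge (i + 1) z with h | h
        · exact h
        · exfalso
          have : i + 1 = z := by omega
          rw [this, hbz] at hble
          omega
      have hmlb1 := F.m_lb (i + 1) hi1z
      have hhead1 := F.head_short (i + 1) hi1z
      have hKL := KL_aux T n Δ z F s e p hs1 hp1 hen hper (i + 1) hi1z
        (by omega) hble
      exact ⟨i + 1, hi1z, by omega, by omega, by omega, by omega⟩
  · -- Case 1 : s + p ≤ b i, phrase i works
    have hKL := KL_aux T n Δ z F s e p hs1 hp1 hen hper i hilt hc1 (by omega)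
    exact ⟨i, hilt, by omega, by omega, by omega, by omega⟩
end

section
/- Consider a string t = xy (concatenation of strings x and y) and a run ⟨s, e, p⟩ in t with s ≤ |x|+1 and e ≥ |x| and ⌊(e−s+1)/2⌋ + s ≤ |x| + 1. Let pref be the length of the longest common prefix of x[|x|−p+1..|x|]·y and y, and suf be the length of the longest common suffix of x[1..|x|−p] and x. Then the run satisfies s = |x| − p + 1 − suf, e = |x| + pref, and pref + suf ≥ p. -/
theorem stmt_15 {α : Type*} (t : ℕ → α) (nx ny s e p pref suf : ℕ)
    (hrun : IsRun t (nx + ny) s e p)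
    (hs : s ≤ nx + 1) (he : nx ≤ e)
    (hhalf : s + (e - s + 1) / 2 ≤ nx + 1)
    (hpref_le : pref ≤ ny)
    (hpref : ∀ j < pref, t (nx - p + 1 + j) = t (nx + 1 + j))
    (hpref_max : pref = ny ∨ t (nx - p + 1 + pref) ≠ t (nx + 1 + pref))
    (hsuf_le : suf ≤ nx - p)
    (hsuf : ∀ j < suf, t (nx - p - j) = t (nx - j))
    (hsuf_max : suf = nx - p ∨ t (nx - p - suf) ≠ t (nx - suf)) :
    s = nx - p + 1 - suf ∧ e = nx + pref ∧ p ≤ pref + suf := by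
  obtain ⟨hs1, hse, hen, hp1, h2p, hper, hmin, hleft, hright⟩ := hrun
  have hp2 : p ≤ (e - s + 1) / 2 :=
    (Nat.le_div_iff_mul_le (by norm_num)).mpr (by omega)
  have hsp : s + p ≤ nx + 1 := by omega
  have hpnx : p ≤ nx := by omega
  have hE : e = nx + pref := by
    rcases Nat.lt_trichotomy (nx + pref) e with h | h | h
    · have hmatch := hper (nx - p + 1 + pref) (by omega) (by omega)
      have h2 : nx - p + 1 + pref + p = nx + 1 + pref := by omega
      rw [h2] at hmatch
      rcases hpref_max with h' | h'
      · omega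
      · exact absurd hmatch h'
    · exact h.symm
    · have hj : e - nx < pref := by omega
      have hm := hpref (e - nx) hj
      have h1 : nx - p + 1 + (e - nx) = e + 1 - p := by omega
      have h2 : nx + 1 + (e - nx) = e + 1 := by omega
      rw [h1, h2] at hm
      rcases hright with h' | h'
      · omega
      · exact absurd hm.symm h'
  have hS : s + suf = nx - p + 1 := by
    rcases Nat.lt_trichotomy (s + suf) (nx - p + 1) with h | h | h
    · have hmatch := hper (nx - p - suf) (by omega) (by omega)
      have h2 : nx - p - suf + p = nx - suf := by omega
      rw [h2] at hmatch
      rcases hsuf_max with h' | h'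
      · omega
      · exact absurd hmatch h'
    · exact h
    · have hj : nx - p + 1 - s < suf := by omega
      have hm := hsuf (nx - p + 1 - s) hj
      have h1 : nx - p - (nx - p + 1 - s) = s - 1 := by omega
      have h2 : nx - (nx - p + 1 - s) = s - 1 + p := by omega
      rw [h1, h2] at hm
      rcases hleft with h' | h'
      · omega
      · exact absurd hm h'
  refine ⟨by omega, hE, by omega⟩
end

section
/- Consider a set of phrases of the form T[i_j .. i_{j+1} + τ − 1] where i₁ < i₂ < ⋯ < i_k are positions of a set S with the property that for i in the relevant range, i ∈ S if and only if T[i..i+τ−1] ∈ D for a fixed set D of strings of length τ. Then the set of distinct phrases is prefix-free: no phrase is a proper prefix of another phrase. -/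
theorem stmt_16 {α : Type*} (T : ℕ → α) (τ k : ℕ) (hτ : 1 ≤ τ) (hk : 1 ≤ k)
    (D : Set (Fin τ → α)) (idx : ℕ → ℕ)
    (hmono : ∀ a b, a < b → b < k → idx a < idx b)
    (hS : ∀ p, idx 0 ≤ p → p ≤ idx (k - 1) →
      ((∃ a < k, idx a = p) ↔ (fun t : Fin τ => T (p + (t : ℕ))) ∈ D)) :
    ∀ a b, a + 1 < k → b + 1 < k →
      idx (a + 1) + τ - idx a < idx (b + 1) + τ - idx b →
      (∀ m < idx (a + 1) + τ - idx a, T (idx a + m) = T (idx b + m)) → False := by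
  intro a b ha hb hlen hpref
  have hk1 : k - 1 < k := Nat.sub_lt (by omega) one_pos
  have hmono' : ∀ x y, x ≤ y → y < k → idx x ≤ idx y := by
    intro x y hxy hy
    rcases eq_or_lt_of_le hxy with rfl | h
    · exact le_rfl
    · exact (hmono x y h hy).le
  have haa : idx a < idx (a + 1) := hmono a (a + 1) (by omega) ha
  have hbb : idx b < idx (b + 1) := hmono b (b + 1) (by omega) hb
  obtain ⟨d, hd⟩ : ∃ d, idx (a + 1) = idx a + d := ⟨idx (a+1) - idx a, by omega⟩
  have hdlt : idx b + d < idx (b + 1) := by omega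
  obtain ⟨p, hp⟩ : ∃ p, p = idx b + d := ⟨_, rfl⟩
  have h1 : (fun t : Fin τ => T (idx (a + 1) + (t : ℕ))) ∈ D := by
    have := hS (idx (a + 1)) (hmono' 0 (a + 1) (by omega) ha)
      (hmono' (a + 1) (k - 1) (by omega) hk1)
    exact this.mp ⟨a + 1, ha, rfl⟩
  have h2 : (fun t : Fin τ => T (p + (t : ℕ))) ∈ D := by
    have heq : (fun t : Fin τ => T (p + (t : ℕ)))
        = (fun t : Fin τ => T (idx (a + 1) + (t : ℕ))) := by
      funext t
      have ht := t.2
      have hm := hpref (d + (t : ℕ)) (by omega)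
      have h3 : idx a + (d + (t : ℕ)) = idx (a + 1) + (t : ℕ) := by omega
      have h4 : idx b + (d + (t : ℕ)) = p + (t : ℕ) := by omega
      rw [h3, h4] at hm
      exact hm.symm
    rw [heq]; exact h1
  have h5 := (hS p (by have := hmono' 0 b (by omega) (by omega); omega)
    (by have := hmono' (b + 1) (k - 1) (by omega) hk1; omega)).mpr h2
  obtain ⟨c, hc, hcp⟩ := h5
  rw [hp] at hcp
  rcases lt_trichotomy c b with h | h | h
  · have := hmono' c b h.le (by omega); omega
  · subst h; omega
  · have := hmono' (b + 1) c h hc; omega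
end

section
/- Let Δ ≥ 1 and suppose the positions i₁ < ⋯ < i_b form a Δ-cover of {1,…,m} for a string T' of length m. Define for each i_k the value len(i_k) = max over h < k of lce(i_h, i_k) (and len(i₁) = 0). Greedily factorise T' from left to right: given a current start s, let S = {i₁,…,i_b} ∩ {s,…,s+Δ−1}; if some i_k ∈ S has i_k + len(i_k) > s + Δ − 1, choose i_k ∈ S maximizing i_k + len(i_k) and emit the phrase T'[s..i_k+len(i_k)−1] with head T'[s..i_k−1] and tail T'[i_k..i_k+len(i_k)−1]; otherwise emit T'[s..min(m, s+Δ−1)] with empty tail. Then the resulting factorisation is a Δ-approximate LZ factorisation of T': for every emitted phrase T'[s..e], the standard LZ phrase T'[s..e'] at s satisfies e' − 1 ≤ e. -/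
theorem stmt_17 {α : Type*} (T' : ℕ → α) (m Δ : ℕ) (hΔ : 1 ≤ Δ) (hΔm : Δ ≤ m)
    (C : Finset ℕ) (hCrange : ∀ c ∈ C, 1 ≤ c ∧ c ≤ m)
    (h : ℕ → ℕ → ℕ)
    (hcover : ∀ i j, 1 ≤ i → 1 ≤ j → i ≤ m - Δ + 1 → j ≤ m - Δ + 1 →
      h i j < Δ ∧ i + h i j ∈ C ∧ j + h i j ∈ C)
    (len : ℕ → ℕ)
    (hlen_lb : ∀ c ∈ C, ∀ c' ∈ C, c' < c → ∀ k, c + k ≤ m + 1 →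
      (∀ x < k, T' (c' + x) = T' (c + x)) → k ≤ len c)
    (hlen_ub : ∀ c ∈ C, len c = 0 ∨ (c + len c ≤ m + 1 ∧
      ∃ c' ∈ C, c' < c ∧ ∀ x < len c, T' (c' + x) = T' (c + x))) :
    ∀ s, 1 ≤ s → s ≤ m →
      ((∀ c ∈ C, s ≤ c → c ≤ s + Δ - 1 → c + len c ≤ s + Δ - 1) →
        ∀ e', LZEnd T' m s e' → e' - 1 ≤ min m (s + Δ - 1)) ∧
      (∀ c ∈ C, s ≤ c → c ≤ s + Δ - 1 →
        (∀ c₂ ∈ C, s ≤ c₂ → c₂ ≤ s + Δ - 1 → c₂ + len c₂ ≤ c + len c) →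
        s + Δ - 1 < c + len c →
        ∀ e', LZEnd T' m s e' → e' - 1 ≤ c + len c - 1) := by
  intro s hs1 hsm
  have key : ∀ e', LZEnd T' m s e' → s + Δ + 1 ≤ e' →
      ∃ c ∈ C, s ≤ c ∧ c ≤ s + Δ - 1 ∧ e' ≤ c + len c := by
    rintro e' ⟨hse, hem, hocc, -⟩ hbig
    rcases hocc with rfl | ⟨p, hp1, hps, hmatch⟩
    · omega
    · obtain ⟨hh, hc', hc⟩ := hcover p s hp1 hs1 (by omega) (by omega)
      refine ⟨s + h p s, hc, by omega, by omega, ?_⟩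
      have hb := hlen_lb (s + h p s) hc (p + h p s) hc' (by omega)
        (e' - (s + h p s)) (by omega) ?_
      · omega
      · intro x hx
        have := hmatch (h p s + x) (by omega)
        convert this using 2 <;> omega
  constructor
  · intro hall e' hlz
    by_cases hcase : e' ≤ s + Δ
    · have := hlz.2.1; omega
    · obtain ⟨c, hcC, hsc, hcw, hec⟩ := key e' hlz (by omega)
      have := hall c hcC hsc hcw
      omega
  · intro c hcC hsc hcw hmax hbig e' hlz
    by_cases hcase : e' ≤ s + Δ
    · omega
    · obtain ⟨c₂, hc₂C, hsc₂, hcw₂, hec₂⟩ := key e' hlz (by omega)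
      have := hmax c₂ hc₂C hsc₂ hcw₂
      omega
end

section
/- If p and q are periods of a string T of length n and p + q ≤ n + gcd(p,q), then gcd(p,q) is also a period of T (Fine–Wilf periodicity lemma). -/
theorem fw_aux {α : Type*} (T : ℕ → α) (n p q : ℕ) (hqp : q ≤ p) (hq : 1 ≤ q)
    (hP : ∀ i, 1 ≤ i → i + p ≤ n → T i = T (i + p))
    (hQ : ∀ i, 1 ≤ i → i + q ≤ n → T i = T (i + q))
    (h : p + q ≤ n + Nat.gcd p q) :
    ∀ i, 1 ≤ i → i + Nat.gcd p q ≤ n → T i = T (i + Nat.gcd p q) := by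
  rcases eq_or_lt_of_le hqp with heq | hgt
  · subst heq
    simpa [Nat.gcd_self] using hP
  · -- q < p
    obtain ⟨g, hgdef⟩ : ∃ g, g = Nat.gcd p q := ⟨_, rfl⟩
    rw [← hgdef] at h ⊢
    have hgq : g ∣ q := hgdef ▸ Nat.gcd_dvd_right p q
    have hgp : g ∣ p := hgdef ▸ Nat.gcd_dvd_left p q
    have hg1 : 1 ≤ g := hgdef ▸ Nat.gcd_pos_of_pos_right p hq
    have hgleq : g ≤ q := Nat.le_of_dvd hq hgq
    have hgpq : g ∣ p - q := Nat.dvd_sub hgp hgq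
    have hpq1 : 1 ≤ p - q := by omega
    have hpqg : g ≤ p - q := Nat.le_of_dvd hpq1 hgpq
    have h2q : 2 * q ≤ n := by omega
    -- p - q is a period of T[1..n-q]
    have hP' : ∀ i, 1 ≤ i → i + (p - q) ≤ n - q → T i = T (i + (p - q)) := by
      intro i h1 h2
      have hn : i + p ≤ n := by omega
      have e : T (i + (p - q)) = T (i + p) := by
        have := hQ (i + (p - q)) (by omega) (by omega)
        rwa [show i + (p - q) + q = i + p from by omega] at this
      exact (hP i h1 hn).trans e.symm
    have hQ' : ∀ i, 1 ≤ i → i + q ≤ n - q → T i = T (i + q) := by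
      intro i h1 h2; exact hQ i h1 (by omega)
    have hgcd : Nat.gcd (p - q) q = g := by
      rw [hgdef]; exact Nat.gcd_sub_self_left hqp
    -- recursive call
    have hpre : ∀ i, 1 ≤ i → i + g ≤ n - q → T i = T (i + g) := by
      rcases le_or_gt q (p - q) with hle | hle
      · have hrec := fw_aux T (n - q) (p - q) q hle hq hP' hQ'
          (by rw [hgcd]; omega)
        rwa [hgcd] at hrec
      · have hgcd' : Nat.gcd q (p - q) = g := by rw [Nat.gcd_comm]; exact hgcd
        have hrec := fw_aux T (n - q) q (p - q) (le_of_lt hle) hpq1 hQ' hP'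
          (by rw [hgcd']; omega)
        rwa [hgcd'] at hrec
    -- chains
    have chainQ : ∀ k x, 1 ≤ x → x + k * q ≤ n → T x = T (x + k * q) := by
      intro k
      induction k with
      | zero => intro x _ _; simp
      | succ k ih =>
        intro x h1 h2
        have hk : (k + 1) * q = q + k * q := by ring
        have e1 : T x = T (x + q) := hQ x h1 (by omega)
        have e2 : T (x + q) = T (x + q + k * q) := ih (x + q) (by omega) (by omega)
        rw [e1, e2, show x + q + k * q = x + (k + 1) * q from by ring]
    have chainG : ∀ k x, 1 ≤ x → x + k * g ≤ n - q → T x = T (x + k * g) := by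
      intro k
      induction k with
      | zero => intro x _ _; simp
      | succ k ih =>
        intro x h1 h2
        have hk : (k + 1) * g = g + k * g := by ring
        have e1 : T x = T (x + g) := hpre x h1 (by omega)
        have e2 : T (x + g) = T (x + g + k * g) := ih (x + g) (by omega) (by omega)
        rw [e1, e2, show x + g + k * g = x + (k + 1) * g from by ring]
    intro i hi hig
    obtain ⟨k, r, hr1, hrle, hikr⟩ : ∃ k r, 1 ≤ r ∧ r ≤ q ∧ i = r + k * q :=
      ⟨(i - 1) / q, (i - 1) % q + 1, by omega,
        by have := Nat.mod_lt (i - 1) (show 0 < q by omega); omega,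
        by have := Nat.div_add_mod' (i - 1) q; omega⟩
    have e1 : T r = T i := by
      have := chainQ k r hr1 (by omega)
      rwa [show r + k * q = i from by omega] at this
    rcases le_or_gt (r + g) q with hc | hc
    · have e2 : T (r + g) = T (i + g) := by
        have := chainQ k (r + g) (by omega) (by omega)
        rwa [show r + g + k * q = i + g from by omega] at this
      have e3 : T r = T (r + g) := hpre r hr1 (by omega)
      rw [← e1, e3, e2]
    · obtain ⟨s, hsdef⟩ : ∃ s, s = r + g - q := ⟨_, rfl⟩
      have hs1 : 1 ≤ s := by omega
      have hexp : (k + 1) * q = k * q + q := by ring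
      have e2 : T s = T (i + g) := by
        have := chainQ (k + 1) s hs1 (by omega)
        rwa [show s + (k + 1) * q = i + g from by omega] at this
      obtain ⟨m, hmg⟩ : ∃ m, m * g = q - g :=
        ⟨(q - g) / g, Nat.div_mul_cancel (Nat.dvd_sub hgq (dvd_refl g))⟩
      have e3 : T s = T (s + m * g) := chainG m s hs1 (by omega)
      have hsr : s + m * g = r := by omega
      rw [hsr] at e3
      rw [← e1, ← e3, e2]
termination_by p
decreasing_by
  · omega
  · omega

theorem stmt_19 {α : Type*} (T : ℕ → α) (n p q : ℕ) (hp : 1 ≤ p) (hq : 1 ≤ q)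
    (hP : ∀ i, 1 ≤ i → i + p ≤ n → T i = T (i + p))
    (hQ : ∀ i, 1 ≤ i → i + q ≤ n → T i = T (i + q))
    (h : p + q ≤ n + Nat.gcd p q) :
    ∀ i, 1 ≤ i → i + Nat.gcd p q ≤ n → T i = T (i + Nat.gcd p q) := by
  rcases le_total q p with hqp | hpq
  · exact fw_aux T n p q hqp hq hP hQ h
  · have := fw_aux T n q p hpq hp hQ hP (by rw [Nat.gcd_comm]; omega)
    simpa [Nat.gcd_comm q p] using this
end
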